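/- arXiv:math/0002024 — 4 statements merged into one kernel-verified Lean document; each statement's English description precedes it below -/
import Mathlib

section
/- Let $c, n, d$ be natural numbers with $c \geq 1$, and let $\alpha : c\Delta_n \to \mathbb{R}_+^d$ be an integral affine mapping (i.e., $\alpha$ is affine and maps lattice points of the dilated unit simplex $c\Delta_n$ to points of $\mathbb{Z}_+^d$). Then there exist a vector $v \in \mathbb{Z}_+^d$ and an integral affine mapping $\beta : \Delta_n \to \mathbb{R}_+^d$ such that $\alpha = v + c\beta$. -/
/-! The lattice points of `Δₙ` are its vertices `0` and `eᵢ`. As `α` is affine,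
`α(c eᵢ) - α(0) = c (α(eᵢ) - α(0))`, and `α(eᵢ)` is integral because `eᵢ ∈ cΔₙ` for `c ≥ 1`; so the
values of `α` at the vertices of `cΔₙ` are coordinatewise congruent modulo `c`. With `v` their
coordinatewise minimum, `β p := (α (c p) - v) / c` is affine and takes values in `ℤ₊^d` at the
vertices of `Δₙ`. -/

open Finset

section SimplexVertex

variable {ι : Type*} [DecidableEq ι]

def simplexVertex : Option ι → ι → ℤ
  | none => 0
  | some i => Pi.single i 1

theorem simplexVertex_nonneg (o : Option ι) (i : ι) : 0 ≤ simplexVertex o i := by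
  cases o with
  | none => exact le_rfl
  | some k => exact (Pi.single_nonneg (α := fun _ : ι => ℤ)).mpr zero_le_one i

variable [Fintype ι]

theorem sum_simplexVertex_le_one (o : Option ι) : ∑ i, simplexVertex o i ≤ 1 := by
  cases o <;> simp [simplexVertex]

theorem exists_eq_simplexVertex {x : ι → ℤ} (hx : ∀ i, 0 ≤ x i) (hsum : ∑ i, x i ≤ 1) :
    ∃ o, x = simplexVertex o := by
  by_cases hzero : x = 0
  · exact ⟨none, hzero⟩
  obtain ⟨i, hi⟩ := Function.ne_iff.mp hzero
  have hsplit := add_sum_erase univ x (mem_univ i)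
  have hrest_nonneg := sum_nonneg fun k (_ : k ∈ univ.erase i) => hx k
  have hxi_pos := (hx i).lt_of_ne' hi
  have hxi : x i = 1 := by omega
  have hrest : ∑ k ∈ univ.erase i, x k = 0 := by omega
  refine ⟨some i, funext fun k => ?_⟩
  rcases eq_or_ne k i with rfl | hk
  · simpa [simplexVertex] using hxi
  · simp [simplexVertex, hk,
      (sum_eq_zero_iff_of_nonneg fun k _ => hx k).mp hrest k (mem_erase.mpr ⟨hk, mem_univ k⟩)]

end SimplexVertex

theorem AffineMap.apply_smul_sub_apply_zero {k V W : Type*} [Ring k] [AddCommGroup V]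
    [Module k V] [AddCommGroup W] [Module k W] (f : V →ᵃ[k] W) (t : k) (p : V) :
    f (t • p) - f 0 = t • (f p - f 0) := by
  rw [← vsub_eq_sub, ← vsub_eq_sub, ← f.linearMap_vsub, ← f.linearMap_vsub, vsub_eq_sub,
    vsub_eq_sub, sub_zero, sub_zero, map_smul]

theorem AffineMap.exists_apply_smul_eq_add_smul {k V W : Type*} [Field k] [AddCommGroup V]
    [Module k V] [AddCommGroup W] [Module k W] (f : V →ᵃ[k] W) {c : k} (hc : c ≠ 0) (v : W) :
    ∃ g : V →ᵃ[k] W, ∀ p, f (c • p) = v + c • g p :=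
  ⟨c⁻¹ • (f.comp (AffineMap.homothety 0 c) - AffineMap.const k V v), fun p => by
    simp [AffineMap.homothety_apply, smul_inv_smul₀ hc]⟩

theorem AffineMap.dvd_apply_smul_sub_apply_zero {V κ : Type*} [AddCommGroup V] [Module ℝ V]
    (f : V →ᵃ[ℝ] κ → ℝ) (c : ℤ) (p : V) (j : κ) {a a₀ b : ℤ} (ha : f ((c : ℝ) • p) j = a)
    (ha₀ : f 0 j = a₀) (hb : f p j = b) : c ∣ a - a₀ := by
  refine ⟨b - a₀, Int.cast_injective (α := ℝ) ?_⟩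
  have := congrFun (f.apply_smul_sub_apply_zero (c : ℝ) p) j
  simp only [Pi.sub_apply, Pi.smul_apply, smul_eq_mul, ha, ha₀, hb] at this
  push_cast
  exact this

theorem Int.exists_nonneg_forall_eq_add_mul {κ : Type*} [Finite κ] {a : κ → ℤ} {c : ℤ}
    (hc : 0 < c) (ha : ∀ k, 0 ≤ a k) (k₁ : κ) (hdvd : ∀ k, c ∣ a k - a k₁) :
    ∃ v, 0 ≤ v ∧ ∀ k, ∃ m, 0 ≤ m ∧ a k = v + c * m := by
  have : Nonempty κ := ⟨k₁⟩
  obtain ⟨k₀, hk₀⟩ := Finite.exists_min a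
  refine ⟨a k₀, ha k₀, fun k => ?_⟩
  obtain ⟨m, hm⟩ := dvd_sub (hdvd k) (hdvd k₀)
  refine ⟨m, nonneg_of_mul_nonneg_right ?_ hc, by linarith⟩
  linarith [hk₀ k]

open Finset in
/-- Lemma 4.4: an integral affine map `α : cΔₙ → ℝ₊^d` decomposes as `α = v + cβ`
with `v ∈ ℤ₊^d` and `β : Δₙ → ℝ₊^d` integral affine. -/
theorem integral_affine_map_on_dilated_simplex_decomposes
    (c n d : ℕ) (hc : 1 ≤ c)
    (α : (Fin n → ℝ) →ᵃ[ℝ] (Fin d → ℝ))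
    (hα : ∀ x : Fin n → ℤ, (∀ i, 0 ≤ x i) → (∑ i, x i) ≤ (c : ℤ) →
      ∀ j, ∃ m : ℤ, 0 ≤ m ∧ α (fun i => (x i : ℝ)) j = (m : ℝ)) :
    ∃ (v : Fin d → ℤ) (β : (Fin n → ℝ) →ᵃ[ℝ] (Fin d → ℝ)),
      (∀ j, 0 ≤ v j) ∧
      (∀ x : Fin n → ℤ, (∀ i, 0 ≤ x i) → (∑ i, x i) ≤ (1 : ℤ) →
        ∀ j, ∃ m : ℤ, 0 ≤ m ∧ β (fun i => (x i : ℝ)) j = (m : ℝ)) ∧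
      (∀ p : Fin n → ℝ, (∀ i, 0 ≤ p i) → (∑ i, p i) ≤ 1 →
        α ((c : ℝ) • p) = (fun j => (v j : ℝ)) + (c : ℝ) • β p) := by
  have hc₀ : (0 : ℤ) < c := by omega
  let vertex (o : Option (Fin n)) : Fin n → ℝ := fun i => simplexVertex o i
  have hvertex_zero : vertex none = 0 := by ext; simp [vertex, simplexVertex]
  have hscaled : ∀ o j, ∃ m : ℤ, 0 ≤ m ∧ α ((c : ℝ) • vertex o) j = m := by
    intro o
    have hpoint : (c : ℝ) • vertex o = fun i => (((c : ℤ) • simplexVertex o) i : ℝ) := by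
      ext
      simp [vertex]
    rw [hpoint]
    exact hα _ (fun i => mul_nonneg hc₀.le (simplexVertex_nonneg o i))
      (by simpa [← mul_sum] using mul_le_of_le_one_right hc₀.le (sum_simplexVertex_le_one o))
  choose A hA_nonneg hA using hscaled
  have hA_dvd : ∀ j o, (c : ℤ) ∣ A o j - A none j := by
    intro j o
    obtain ⟨b, -, hb⟩ := hα (simplexVertex o) (simplexVertex_nonneg o)
      ((sum_simplexVertex_le_one o).trans (by exact_mod_cast hc)) j
    refine α.dvd_apply_smul_sub_apply_zero c (vertex o) j (hA o j) ?_ hb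
    simpa [hvertex_zero] using hA none j
  choose v hv_nonneg m hm_nonneg hm using fun j =>
    Int.exists_nonneg_forall_eq_add_mul hc₀ (hA_nonneg · j) none (hA_dvd j)
  obtain ⟨β, hβ⟩ := α.exists_apply_smul_eq_add_smul (c := c) (by exact_mod_cast hc₀.ne') (fun j => (v j : ℝ))
  refine ⟨v, β, hv_nonneg, fun x hx hsum j => ?_, fun p _ _ => hβ p⟩
  obtain ⟨o, rfl⟩ := exists_eq_simplexVertex hx hsum
  refine ⟨m j o, hm_nonneg j o, ?_⟩
  have hβ_vertex := congrFun (hβ (vertex o)) j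
  rw [hA, hm] at hβ_vertex
  simpa [show c ≠ 0 by omega, eq_comm] using hβ_vertex
end

section
/- Up to unimodular integral-affine equivalence, there are exactly two lattice triangles in $\mathbb{R}^2$ containing exactly 4 lattice points: $\mathrm{conv}((1,0),(0,1),(-1,0))$ and $\mathrm{conv}((1,0),(0,1),(-1,-1))$. -/
/-- Coercion of an integral point of the plane to a real point. -/
def toR2 (p : Fin 2 → ℤ) : Fin 2 → ℝ := fun i => (p i : ℝ)

/-- The lattice points of a subset of the plane. -/
def latticePts (T : Set (Fin 2 → ℝ)) : Set (Fin 2 → ℤ) := {p | toR2 p ∈ T}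

/-- Unimodular integral-affine equivalence of subsets of the plane:
`x ↦ Ax + b` with `A ∈ GL₂(ℤ)`, `b ∈ ℤ²`, mapping `S` onto `T`. -/
def UnimodEquiv (S T : Set (Fin 2 → ℝ)) : Prop :=
  ∃ (A : Matrix (Fin 2) (Fin 2) ℤ) (b : Fin 2 → ℤ), IsUnit A.det ∧
    (fun x => (A.map (Int.cast : ℤ → ℝ)).mulVec x + toR2 b) '' S = T

/-- The triangle `conv((1,0),(0,1),(-1,0))`. -/
noncomputable def Tri1 : Set (Fin 2 → ℝ) :=
  convexHull ℝ {toR2 ![1, 0], toR2 ![0, 1], toR2 ![-1, 0]}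

/-- The triangle `conv((1,0),(0,1),(-1,-1))`. -/
noncomputable def Tri2 : Set (Fin 2 → ℝ) :=
  convexHull ℝ {toR2 ![1, 0], toR2 ![0, 1], toR2 ![-1, -1]}

/-!
An `SL₂(ℤ)` change of coordinates (Hermite normal form) brings a lattice triangle to
`conv(0, (a, 0), (b, c))` with `0 ≤ b < c`. Besides the `a + 1` lattice points of the bottom edge
and the apex `(b, c)`, such a triangle has, for every `0 < j < c`, a lattice point in row `j` or in
row `c - j`: the parallelogram spanned by the two edges at `0` is the union of the triangle and its
point reflection, and each of its rows has length `a ≥ 1`. Four lattice points thus force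
`a = 1, c ≤ 3` or `a = 2, c = 1`, and the few triangles left are enumerated. `Tri1` and `Tri2` are
told apart by an affine invariant: one lattice point of `Tri1` is the midpoint of two others, while
no lattice point of `Tri2` is.
-/

open Matrix

def cross {R : Type*} [CommRing R] (u v : Fin 2 → R) : R := u 0 * v 1 - u 1 * v 0

def triangle (p q r : Fin 2 → ℤ) : Set (Fin 2 → ℝ) := convexHull ℝ {toR2 p, toR2 q, toR2 r}

def normalTriangle (a b c : ℤ) : Set (Fin 2 → ℝ) := triangle 0 ![a, 0] ![b, c]

lemma convex_setOf_cross_sub_nonneg (q r : Fin 2 → ℝ) :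
    Convex ℝ {x | 0 ≤ cross (q - x) (r - x)} := by
  intro y hy z hz α β hα hβ hαβ
  have hlin : cross (q - (α • y + β • z)) (r - (α • y + β • z)) =
      α * cross (q - y) (r - y) + β * cross (q - z) (r - z) := by
    simp only [cross, Pi.sub_apply, Pi.add_apply, Pi.smul_apply, smul_eq_mul]
    linear_combination (q 1 * r 0 - q 0 * r 1) * hαβ
  rw [Set.mem_ofPred_eq, hlin]
  exact add_nonneg (mul_nonneg hα hy) (mul_nonneg hβ hz)

/-- The three quantities, divided by `cross (q - p) (r - p)`, are the barycentric coordinates of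
`x` with respect to `p`, `q`, `r`. -/
lemma mem_convexHull_triple_iff {p q r x : Fin 2 → ℝ} (h : 0 < cross (q - p) (r - p)) :
    x ∈ convexHull ℝ {p, q, r} ↔
      0 ≤ cross (q - x) (r - x) ∧ 0 ≤ cross (r - x) (p - x) ∧ 0 ≤ cross (p - x) (q - x) := by
  constructor
  · refine fun hx => convexHull_min ?_ ((convex_setOf_cross_sub_nonneg q r).inter
      ((convex_setOf_cross_sub_nonneg r p).inter (convex_setOf_cross_sub_nonneg p q))) hx
    simp only [cross, Pi.sub_apply] at h
    rintro y (rfl | rfl | rfl) <;>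
      refine ⟨?_, ?_, ?_⟩ <;> simp only [Set.mem_ofPred_eq, cross, Pi.sub_apply] <;> linarith
  · rintro ⟨h₁, h₂, h₃⟩
    set D := cross (q - p) (r - p)
    refine mem_convexHull_of_exists_fintype
      ![cross (q - x) (r - x) / D, cross (r - x) (p - x) / D, cross (p - x) (q - x) / D]
      ![p, q, r] ?_ ?_ ?_ ?_
    · intro i
      fin_cases i <;> exact div_nonneg ‹_› h.le
    · have hsum : cross (q - x) (r - x) + cross (r - x) (p - x) + cross (p - x) (q - x) = D := by
        simp only [D, cross, Pi.sub_apply]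
        ring
      simp only [Fin.sum_univ_three, cons_val_zero, cons_val_one, cons_val_two, head_cons,
        tail_cons]
      rw [← add_div, ← add_div, hsum, div_self h.ne']
    · intro i
      fin_cases i <;> simp
    · have hcomb : cross (q - x) (r - x) • p + cross (r - x) (p - x) • q +
          cross (p - x) (q - x) • r = D • x := by
        ext i
        fin_cases i <;>
          simp only [D, cross, Fin.zero_eta, Fin.mk_one, Pi.add_apply, Pi.sub_apply, Pi.smul_apply,
            smul_eq_mul] <;> ring
      simp only [Fin.sum_univ_three, cons_val_zero, cons_val_one, cons_val_two, head_cons,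
        tail_cons, div_eq_inv_mul, mul_smul, ← smul_add, hcomb]
      rw [smul_smul, inv_mul_cancel₀ h.ne', one_smul]

lemma cross_sub_ne_zero_of_affineIndependent {p q r : Fin 2 → ℝ}
    (h : AffineIndependent ℝ ![p, q, r]) : cross (q - p) (r - p) ≠ 0 := by
  rw [affineIndependent_iff_linearIndependent_vsub ℝ _ 0] at h
  have hli : LinearIndependent ℝ ![q - p, r - p] := by
    have e : ![q - p, r - p] = (fun i : {x : Fin 3 // x ≠ 0} => ![p, q, r] i -ᵥ ![p, q, r] 0) ∘
        (fun i : Fin 2 => ⟨i.succ, Fin.succ_ne_zero i⟩) := by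
      ext i : 1
      fin_cases i <;> rfl
    rw [e]
    exact h.comp _ fun i j hij => Fin.succ_injective _ (congrArg Subtype.val hij)
  have hu : IsUnit (of ![q - p, r - p]) := linearIndependent_rows_iff_isUnit.mp hli
  rw [isUnit_iff_isUnit_det, det_fin_two, isUnit_iff_ne_zero] at hu
  simpa [cross] using hu

lemma toR2_add (u v : Fin 2 → ℤ) : toR2 (u + v) = toR2 u + toR2 v := by
  ext i
  simp [toR2]

lemma toR2_sub (u v : Fin 2 → ℤ) : toR2 (u - v) = toR2 u - toR2 v := by
  ext i
  simp [toR2]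

lemma toR2_mulVec (A : Matrix (Fin 2) (Fin 2) ℤ) (x : Fin 2 → ℤ) :
    A.map (Int.cast : ℤ → ℝ) *ᵥ toR2 x = toR2 (A *ᵥ x) := by
  ext i
  simp [toR2, mulVec, dotProduct]

lemma cross_toR2 (u v : Fin 2 → ℤ) : cross (toR2 u) (toR2 v) = cross u v := by
  simp [cross, toR2]

lemma triangle_swap_left (p q r : Fin 2 → ℤ) : triangle p q r = triangle q p r := by
  rw [triangle, triangle, Set.insert_comm]

lemma triangle_swap_right (p q r : Fin 2 → ℤ) : triangle p q r = triangle p r q := by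
  rw [triangle, triangle, Set.pair_comm]

lemma mem_latticePts_triangle_iff {p q r x : Fin 2 → ℤ} (h : 0 < cross (q - p) (r - p)) :
    x ∈ latticePts (triangle p q r) ↔
      0 ≤ cross (q - x) (r - x) ∧ 0 ≤ cross (r - x) (p - x) ∧ 0 ≤ cross (p - x) (q - x) := by
  have hR : 0 < cross (toR2 q - toR2 p) (toR2 r - toR2 p) := by
    rw [← toR2_sub, ← toR2_sub, cross_toR2]
    exact_mod_cast h
  simp only [latticePts, triangle, Set.mem_ofPred_eq, mem_convexHull_triple_iff hR, ← toR2_sub,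
    cross_toR2]
  norm_cast

lemma latticePts_triangle_subset_Icc (p q r : Fin 2 → ℤ) :
    latticePts (triangle p q r) ⊆ Set.Icc (p ⊓ q ⊓ r) (p ⊔ q ⊔ r) := by
  intro x hx
  have hmono : Monotone toR2 := fun u v huv i => Int.cast_le.mpr (huv i)
  have hbox : toR2 x ∈ Set.Icc (toR2 (p ⊓ q ⊓ r)) (toR2 (p ⊔ q ⊔ r)) := by
    refine convexHull_min ?_ (convex_Icc _ _) hx
    rintro y (rfl | rfl | rfl)
    · exact ⟨hmono (inf_le_left.trans inf_le_left), hmono (le_sup_left.trans le_sup_left)⟩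
    · exact ⟨hmono (inf_le_left.trans inf_le_right), hmono (le_sup_right.trans le_sup_left)⟩
    · exact ⟨hmono inf_le_right, hmono le_sup_right⟩
  exact ⟨fun i => Int.cast_le.mp (hbox.1 i), fun i => Int.cast_le.mp (hbox.2 i)⟩

/-- Makes the lattice points of an explicit triangle computable by `decide`. -/
lemma latticePts_triangle_eq_filter {p q r : Fin 2 → ℤ} (h : 0 < cross (q - p) (r - p)) :
    latticePts (triangle p q r) = ↑{x ∈ Finset.Icc (p ⊓ q ⊓ r) (p ⊔ q ⊔ r) |
      0 ≤ cross (q - x) (r - x) ∧ 0 ≤ cross (r - x) (p - x) ∧ 0 ≤ cross (p - x) (q - x)} := by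
  ext x
  rw [Finset.coe_filter, Set.mem_ofPred_eq, Finset.mem_Icc, ← mem_latticePts_triangle_iff h]
  exact ⟨fun hx => ⟨latticePts_triangle_subset_Icc p q r hx, hx⟩, And.right⟩

lemma ncard_latticePts_triangle {p q r : Fin 2 → ℤ} (h : 0 < cross (q - p) (r - p)) :
    (latticePts (triangle p q r)).ncard = ({x ∈ Finset.Icc (p ⊓ q ⊓ r) (p ⊔ q ⊔ r) |
      0 ≤ cross (q - x) (r - x) ∧ 0 ≤ cross (r - x) (p - x) ∧ 0 ≤ cross (p - x) (q - x)}).card := by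
  rw [latticePts_triangle_eq_filter h, Set.ncard_coe_finset]

lemma map_intCast_mul (A B : Matrix (Fin 2) (Fin 2) ℤ) :
    (A * B).map (Int.cast : ℤ → ℝ) = A.map Int.cast * B.map Int.cast :=
  Matrix.map_mul (f := Int.castRingHom ℝ)

lemma mulVec_add_injective {A : Matrix (Fin 2) (Fin 2) ℤ} (hA : IsUnit A.det) (t : Fin 2 → ℤ) :
    Function.Injective fun x => A *ᵥ x + t := fun x y hxy => by
  simpa only [mulVec_mulVec, nonsing_inv_mul A hA, one_mulVec] using
    congrArg (A⁻¹ *ᵥ ·) (add_right_cancel hxy)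

lemma unimodEquiv_triangle {A : Matrix (Fin 2) (Fin 2) ℤ} (hA : IsUnit A.det)
    {t p q r p' q' r' : Fin 2 → ℤ} (hp : A *ᵥ p + t = p') (hq : A *ᵥ q + t = q')
    (hr : A *ᵥ r + t = r') : UnimodEquiv (triangle p q r) (triangle p' q' r') := by
  refine ⟨A, t, hA, ?_⟩
  let f : (Fin 2 → ℝ) →ᵃ[ℝ] (Fin 2 → ℝ) :=
    (A.map (Int.cast : ℤ → ℝ)).mulVecLin.toAffineMap + AffineMap.const ℝ _ (toR2 t)
  have hf : ∀ x, f (toR2 x) = toR2 (A *ᵥ x + t) := fun x => by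
    show A.map Int.cast *ᵥ toR2 x + toR2 t = _
    rw [toR2_mulVec, toR2_add]
  change f '' _ = _
  rw [triangle, triangle, AffineMap.image_convexHull]
  simp only [Set.image_insert_eq, Set.image_singleton, hf, hp, hq, hr]

lemma UnimodEquiv.trans {S T U : Set (Fin 2 → ℝ)} (h₁ : UnimodEquiv S T)
    (h₂ : UnimodEquiv T U) : UnimodEquiv S U := by
  obtain ⟨A, t, hA, rfl⟩ := h₁
  obtain ⟨B, s, hB, rfl⟩ := h₂
  refine ⟨B * A, B *ᵥ t + s, by rw [det_mul]; exact hB.mul hA, ?_⟩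
  rw [Set.image_image]
  congr 1
  funext x
  rw [map_intCast_mul, ← mulVec_mulVec, mulVec_add, add_assoc, toR2_mulVec, ← toR2_add]

lemma UnimodEquiv.exists_latticePts_eq_image {S T : Set (Fin 2 → ℝ)} (h : UnimodEquiv S T) :
    ∃ (A : Matrix (Fin 2) (Fin 2) ℤ) (t : Fin 2 → ℤ), IsUnit A.det ∧
      latticePts T = (fun x => A *ᵥ x + t) '' latticePts S := by
  obtain ⟨A, t, hA, rfl⟩ := h
  refine ⟨A, t, hA, Set.ext fun y => ⟨?_, ?_⟩⟩
  · rintro ⟨z, hz, hzy⟩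
    have hinv : (A⁻¹).map (Int.cast : ℤ → ℝ) * A.map Int.cast = 1 := by
      rw [← map_intCast_mul, nonsing_inv_mul A hA, Matrix.map_one _ Int.cast_zero Int.cast_one]
    have hz' : toR2 (A⁻¹ *ᵥ (y - t)) = z := by
      rw [← toR2_mulVec, toR2_sub, ← hzy, add_sub_cancel_right, mulVec_mulVec, hinv, one_mulVec]
    refine ⟨A⁻¹ *ᵥ (y - t), ?_, ?_⟩
    · rw [latticePts, Set.mem_ofPred_eq, hz']
      exact hz
    · show A *ᵥ (A⁻¹ *ᵥ (y - t)) + t = y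
      rw [mulVec_mulVec, mul_nonsing_inv A hA, one_mulVec, sub_add_cancel]
  · rintro ⟨x, hx, rfl⟩
    refine ⟨toR2 x, hx, ?_⟩
    show A.map Int.cast *ᵥ toR2 x + toR2 t = toR2 (A *ᵥ x + t)
    rw [toR2_mulVec, toR2_add]

lemma UnimodEquiv.ncard_latticePts_eq {S T : Set (Fin 2 → ℝ)} (h : UnimodEquiv S T) :
    (latticePts S).ncard = (latticePts T).ncard := by
  obtain ⟨A, t, hA, hT⟩ := h.exists_latticePts_eq_image
  rw [hT, Set.ncard_image_of_injective _ (mulVec_add_injective hA t)]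

lemma cross_mulVec (A : Matrix (Fin 2) (Fin 2) ℤ) (u v : Fin 2 → ℤ) :
    cross (A *ᵥ u) (A *ᵥ v) = A.det * cross u v := by
  simp only [cross, mulVec, dotProduct, Fin.sum_univ_two, det_fin_two]
  ring

lemma exists_det_eq_one_mulVec_eq_of_ne_zero {u : Fin 2 → ℤ} (hu : u ≠ 0) :
    ∃ A : Matrix (Fin 2) (Fin 2) ℤ, A.det = 1 ∧ ∃ a, 0 < a ∧ A *ᵥ u = ![a, 0] := by
  set g : ℤ := (Int.gcd (u 0) (u 1) : ℤ)
  have hg : 0 < g := by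
    refine Int.natCast_pos.mpr (Int.gcd_pos_iff.mpr ?_)
    by_contra! h
    exact hu (funext fun i => by fin_cases i <;> simp [h.1, h.2])
  obtain ⟨u₀, hu₀⟩ : g ∣ u 0 := Int.gcd_dvd_left (u 0) (u 1)
  obtain ⟨u₁, hu₁⟩ : g ∣ u 1 := Int.gcd_dvd_right (u 0) (u 1)
  set α := Int.gcdA (u 0) (u 1)
  set β := Int.gcdB (u 0) (u 1)
  have hbezout : g = u 0 * α + u 1 * β := Int.gcd_eq_gcd_ab (u 0) (u 1)
  refine ⟨!![α, β; -u₁, u₀], ?_, g, hg, ?_⟩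
  · rw [det_fin_two_of]
    refine mul_left_cancel₀ hg.ne' ?_
    linear_combination (-α) * hu₀ - β * hu₁ - hbezout
  · simp only [mulVec_fin_two, of_apply, cons_val', cons_val_zero, cons_val_one, cons_val_fin_one,
      vecCons_inj, and_true]
    exact ⟨by linear_combination -hbezout, by linear_combination u₀ * hu₁ - u₁ * hu₀⟩

lemma exists_det_eq_one_hermite {u v : Fin 2 → ℤ} (h : 0 < cross u v) :
    ∃ A : Matrix (Fin 2) (Fin 2) ℤ, A.det = 1 ∧
      ∃ a b c, 0 < a ∧ 0 ≤ b ∧ b < c ∧ A *ᵥ u = ![a, 0] ∧ A *ᵥ v = ![b, c] := by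
  have hu : u ≠ 0 := by
    rintro rfl
    simp [cross] at h
  obtain ⟨B, hB, a, ha, hBu⟩ := exists_det_eq_one_mulVec_eq_of_ne_zero hu
  set w := B *ᵥ v
  have hw : 0 < w 1 := by
    have hcross : cross (B *ᵥ u) w = cross u v := by rw [cross_mulVec, hB, one_mul]
    rw [hBu] at hcross
    simp only [cross, cons_val_zero, cons_val_one, zero_mul, sub_zero] at hcross
    exact pos_of_mul_pos_right (hcross ▸ h) ha.le
  let S : Matrix (Fin 2) (Fin 2) ℤ := !![1, -(w 0 / w 1); 0, 1]
  refine ⟨S * B, by rw [det_mul, hB, mul_one, det_fin_two_of]; ring,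
    a, w 0 % w 1, w 1, ha, Int.emod_nonneg _ hw.ne', Int.emod_lt_of_pos _ hw, ?_, ?_⟩
  · rw [← mulVec_mulVec, hBu]
    simp only [S, mulVec_fin_two, of_apply, cons_val', cons_val_zero, cons_val_one,
      cons_val_fin_one, vecCons_inj, and_true]
    constructor <;> ring
  · rw [← mulVec_mulVec]
    change S *ᵥ w = _
    simp only [S, mulVec_fin_two, of_apply, cons_val', cons_val_zero, cons_val_one,
      cons_val_fin_one, vecCons_inj, and_true]
    constructor
    · rw [Int.emod_def]
      ring
    · ring

lemma exists_unimodEquiv_normalTriangle {p q r : Fin 2 → ℤ} (h : 0 < cross (q - p) (r - p)) :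
    ∃ a b c, 0 < a ∧ 0 ≤ b ∧ b < c ∧ UnimodEquiv (triangle p q r) (normalTriangle a b c) := by
  obtain ⟨A, hA, a, b, c, ha, hb, hbc, hq, hr⟩ := exists_det_eq_one_hermite h
  refine ⟨a, b, c, ha, hb, hbc,
    unimodEquiv_triangle (t := -(A *ᵥ p)) (by rw [hA]; exact isUnit_one) ?_ ?_ ?_⟩
  · exact add_neg_cancel _
  · rw [← hq, mulVec_sub, sub_eq_add_neg]
  · rw [← hr, mulVec_sub, sub_eq_add_neg]

section NormalTriangle

variable {a b c : ℤ}

lemma mem_latticePts_normalTriangle_iff (ha : 0 < a) (hc : 0 < c) {x : Fin 2 → ℤ} :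
    x ∈ latticePts (normalTriangle a b c) ↔
      0 ≤ x 1 ∧ b * x 1 ≤ c * x 0 ∧ c * x 0 + (a - b) * x 1 ≤ a * c := by
  rw [normalTriangle, mem_latticePts_triangle_iff (by simpa [cross] using mul_pos ha hc)]
  simp only [cross, Pi.sub_apply, Pi.zero_apply, cons_val_zero, cons_val_one]
  constructor
  · rintro ⟨h₁, h₂, h₃⟩
    exact ⟨nonneg_of_mul_nonneg_right (by linarith) ha, by linarith, by linarith⟩
  · rintro ⟨h₁, h₂, h₃⟩
    exact ⟨by linarith, by linarith, by nlinarith⟩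

lemma exists_mem_latticePts_normalTriangle_row (ha : 0 < a) (hc : 0 < c) {j : ℤ} (hj₀ : 0 ≤ j)
    (hjc : j ≤ c) : ∃ x ∈ latticePts (normalTriangle a b c), x 1 = j ∨ x 1 = c - j := by
  -- `(n, j)` with `n = ⌈b j / c⌉` lies in the parallelogram `0, (a, 0), (a + b, c), (b, c)`, so
  -- it or its point reflection `(a + b - n, c - j)` lies in the triangle.
  obtain ⟨n, hn₁, hn₂⟩ : ∃ n, b * j ≤ c * n ∧ c * n < b * j + c :=
    ⟨(b * j + c - 1) / c, by linarith [Int.lt_mul_ediv_self_add (x := b * j + c - 1) hc],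
      by linarith [Int.mul_ediv_self_le (x := b * j + c - 1) hc.ne']⟩
  by_cases hrow : c * n + (a - b) * j ≤ a * c
  · refine ⟨![n, j], (mem_latticePts_normalTriangle_iff ha hc).2 ?_, Or.inl rfl⟩
    simp only [cons_val_zero, cons_val_one]
    exact ⟨hj₀, hn₁, hrow⟩
  · refine ⟨![a + b - n, c - j], (mem_latticePts_normalTriangle_iff ha hc).2 ?_, Or.inr rfl⟩
    simp only [cons_val_zero, cons_val_one]
    exact ⟨by linarith, by nlinarith, by linarith⟩

lemma bounds_of_ncard_latticePts_normalTriangle_eq_four (ha : 0 < a) (hb : 0 ≤ b) (hbc : b < c)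
    (h4 : (latticePts (normalTriangle a b c)).ncard = 4) : a = 1 ∧ c ≤ 3 ∨ a = 2 ∧ c = 1 := by
  have hc : 0 < c := hb.trans_lt hbc
  set S := latticePts (normalTriangle a b c)
  have mem : ∀ x, x ∈ S ↔ _ := fun x => mem_latticePts_normalTriangle_iff ha hc
  have five (f : Fin 5 → Fin 2 → ℤ) (hf : Function.Injective f) (hfS : ∀ i, f i ∈ S) : False := by
    have := Set.ncard_le_ncard (Set.range_subset_iff.2 hfS)
      (Set.finite_of_ncard_ne_zero (h4 ▸ four_ne_zero))
    rw [Set.ncard_range_of_injective hf, Nat.card_eq_fintype_card, Fintype.card_fin] at this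
    omega
  by_contra hne
  rcases (by omega : 3 ≤ a ∨ a = 2 ∧ 2 ≤ c ∨ a = 1 ∧ 4 ≤ c) with h | ⟨rfl, h⟩ | ⟨rfl, h⟩
  · refine five ![0, ![1, 0], ![2, 0], ![3, 0], ![b, c]] (fun i j hij => ?_) fun i => ?_
    · fin_cases i <;> fin_cases j <;> simp [funext_iff, Fin.forall_fin_two] at hij ⊢ <;> omega
    · fin_cases i <;> refine (mem _).2 ⟨?_, ?_, ?_⟩ <;> simp <;> nlinarith
  · obtain ⟨x, hx, hx1⟩ :=
      exists_mem_latticePts_normalTriangle_row (b := b) ha hc zero_le_one (by omega)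
    obtain ⟨hx₁, hx₂, hx₃⟩ := (mem x).1 hx
    refine five ![0, ![1, 0], ![2, 0], ![b, c], x] (fun i j hij => ?_) fun i => ?_
    · fin_cases i <;> fin_cases j <;> simp [funext_iff, Fin.forall_fin_two] at hij ⊢ <;> omega
    · fin_cases i <;> refine (mem _).2 ⟨?_, ?_, ?_⟩ <;> simp <;> nlinarith
  · obtain ⟨x, hx, hx1⟩ :=
      exists_mem_latticePts_normalTriangle_row (b := b) ha hc zero_le_one (by omega)
    obtain ⟨y, hy, hy1⟩ :=
      exists_mem_latticePts_normalTriangle_row (b := b) ha hc zero_le_two (by omega)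
    obtain ⟨hx₁, hx₂, hx₃⟩ := (mem x).1 hx
    obtain ⟨hy₁, hy₂, hy₃⟩ := (mem y).1 hy
    refine five ![0, ![1, 0], ![b, c], x, y] (fun i j hij => ?_) fun i => ?_
    · fin_cases i <;> fin_cases j <;> simp [funext_iff, Fin.forall_fin_two] at hij ⊢ <;> omega
    · fin_cases i <;> refine (mem _).2 ⟨?_, ?_, ?_⟩ <;> simp <;> nlinarith

lemma cases_of_ncard_latticePts_normalTriangle_eq_four (ha : 0 < a) (hb : 0 ≤ b) (hbc : b < c)
    (h4 : (latticePts (normalTriangle a b c)).ncard = 4) :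
    (a, b, c) = (2, 0, 1) ∨ (a, b, c) = (1, 0, 2) ∨ (a, b, c) = (1, 1, 2) ∨
      (a, b, c) = (1, 2, 3) := by
  rcases bounds_of_ncard_latticePts_normalTriangle_eq_four ha hb hbc h4 with
    ⟨rfl, hc⟩ | ⟨rfl, rfl⟩
  · have hc₀ : 0 < c := by omega
    -- `(1, 0, 1)`, `(1, 0, 3)` and `(1, 1, 3)` are excluded by their 3, 5 and 5 lattice points.
    interval_cases c <;> interval_cases b <;>
      first
      | decide
      | (rw [normalTriangle, ncard_latticePts_triangle (by decide)] at h4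
         exact absurd h4 (by decide))
  · obtain rfl : b = 0 := by omega
    decide

lemma normalTriangle_unimodEquiv_Tri1_or_Tri2 (ha : 0 < a) (hb : 0 ≤ b) (hbc : b < c)
    (h4 : (latticePts (normalTriangle a b c)).ncard = 4) :
    UnimodEquiv (normalTriangle a b c) Tri1 ∨ UnimodEquiv (normalTriangle a b c) Tri2 := by
  rcases cases_of_ncard_latticePts_normalTriangle_eq_four ha hb hbc h4 with h | h | h | h <;>
    simp only [Prod.mk.injEq] at h <;> obtain ⟨rfl, rfl, rfl⟩ := h
  · left
    rw [show Tri1 = triangle ![1, 0] ![-1, 0] ![0, 1] from triangle_swap_right _ _ _]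
    exact unimodEquiv_triangle (A := !![-1, -1; 0, 1]) (t := ![1, 0]) (by decide) (by decide)
      (by decide) (by decide)
  · left
    exact unimodEquiv_triangle (A := !![-1, -1; 1, 0]) (t := ![1, 0]) (by decide) (by decide)
      (by decide) (by decide)
  · left
    rw [show Tri1 = triangle ![0, 1] ![1, 0] ![-1, 0] from triangle_swap_left _ _ _]
    exact unimodEquiv_triangle (A := !![1, -1; -1, 0]) (t := ![0, 1]) (by decide) (by decide)
      (by decide) (by decide)
  · right
    exact unimodEquiv_triangle (A := !![-1, 0; 1, -1]) (t := ![1, 0]) (by decide) (by decide)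
      (by decide) (by decide)

end NormalTriangle

lemma ncard_latticePts_Tri1 : (latticePts Tri1).ncard = 4 := by
  rw [show Tri1 = triangle ![1, 0] ![0, 1] ![-1, 0] from rfl, ncard_latticePts_triangle (by decide)]
  decide

lemma ncard_latticePts_Tri2 : (latticePts Tri2).ncard = 4 := by
  rw [show Tri2 = triangle ![1, 0] ![0, 1] ![-1, -1] from rfl,
    ncard_latticePts_triangle (by decide)]
  decide

lemma not_unimodEquiv_Tri1_Tri2 : ¬ UnimodEquiv Tri1 Tri2 := by
  intro h
  obtain ⟨A, t, hA, himage⟩ := h.exists_latticePts_eq_image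
  have h₁ : latticePts Tri1 = _ :=
    latticePts_triangle_eq_filter (p := ![1, 0]) (q := ![0, 1]) (r := ![-1, 0]) (by decide)
  have h₂ : latticePts Tri2 = _ :=
    latticePts_triangle_eq_filter (p := ![1, 0]) (q := ![0, 1]) (r := ![-1, -1]) (by decide)
  have hmid : ∀ u ∈ latticePts Tri2, ∀ v ∈ latticePts Tri2, ∀ m ∈ latticePts Tri2,
      u + v = m + m → u = v := by
    rw [h₂]
    decide
  have hpts : ![1, 0] ∈ latticePts Tri1 ∧ ![-1, 0] ∈ latticePts Tri1 ∧ 0 ∈ latticePts Tri1 := by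
    rw [h₁]
    decide
  have hmem : ∀ x ∈ latticePts Tri1, A *ᵥ x + t ∈ latticePts Tri2 :=
    fun x hx => himage ▸ Set.mem_image_of_mem _ hx
  have hsum : A *ᵥ ![1, 0] + t + (A *ᵥ ![-1, 0] + t) = A *ᵥ 0 + t + (A *ᵥ 0 + t) := by
    rw [add_add_add_comm, ← mulVec_add, show ![1, 0] + ![-1, 0] = (0 : Fin 2 → ℤ) by decide]
    simp only [mulVec_zero, zero_add]
  have := mulVec_add_injective hA t
    (hmid _ (hmem _ hpts.1) _ (hmem _ hpts.2.1) _ (hmem _ hpts.2.2) hsum)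
  exact absurd this (by decide)

lemma unimodEquiv_Tri1_or_Tri2 {p q r : Fin 2 → ℤ} (h : 0 < cross (q - p) (r - p))
    (h4 : (latticePts (triangle p q r)).ncard = 4) :
    UnimodEquiv (triangle p q r) Tri1 ∨ UnimodEquiv (triangle p q r) Tri2 := by
  obtain ⟨a, b, c, ha, hb, hbc, hnormal⟩ := exists_unimodEquiv_normalTriangle h
  rw [hnormal.ncard_latticePts_eq] at h4
  exact (normalTriangle_unimodEquiv_Tri1_or_Tri2 ha hb hbc h4).imp hnormal.trans hnormal.trans

/-- Up to unimodular equivalence there are exactly two lattice triangles with exactly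
four lattice points, namely `Tri1` and `Tri2`. -/
theorem four_point_lattice_triangles_classification :
    (Set.ncard (latticePts Tri1) = 4) ∧ (Set.ncard (latticePts Tri2) = 4) ∧
    ¬ UnimodEquiv Tri1 Tri2 ∧
    ∀ p q r : Fin 2 → ℤ, AffineIndependent ℝ ![toR2 p, toR2 q, toR2 r] →
      Set.ncard (latticePts (convexHull ℝ {toR2 p, toR2 q, toR2 r})) = 4 →
      UnimodEquiv (convexHull ℝ {toR2 p, toR2 q, toR2 r}) Tri1 ∨
      UnimodEquiv (convexHull ℝ {toR2 p, toR2 q, toR2 r}) Tri2 := by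
  refine ⟨ncard_latticePts_Tri1, ncard_latticePts_Tri2, not_unimodEquiv_Tri1_Tri2, ?_⟩
  intro p q r hind h4
  change (latticePts (triangle p q r)).ncard = 4 at h4
  change UnimodEquiv (triangle p q r) Tri1 ∨ UnimodEquiv (triangle p q r) Tri2
  have hcross := cross_sub_ne_zero_of_affineIndependent hind
  rw [← toR2_sub, ← toR2_sub, cross_toR2, Int.cast_ne_zero] at hcross
  rcases hcross.lt_or_gt with hneg | hpos
  · rw [triangle_swap_right] at h4 ⊢
    exact unimodEquiv_Tri1_or_Tri2 (by unfold cross at hneg ⊢; linarith) h4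
  · exact unimodEquiv_Tri1_or_Tri2 hpos h4
end

section
/- Let $P \subset \mathbb{R}^d$ be a lattice polytope, $v \in \mathbb{Z}^d$ a column vector for $P$ with base facet $P_v$, and let $S_P \subset \mathbb{Z}^{d+1}$ be the semigroup generated by $\{(x,1) : x \in P \cap \mathbb{Z}^d\}$. For $x \in S_P$ define $\mathrm{ht}_v(x)$ to be the largest nonnegative integer $m$ with $x + m(v,0) \in S_P$. Then for every $x \in S_P$, the element $x + \mathrm{ht}_v(x) \cdot (v,0)$ belongs to $S_{P_v}$, the subsemigroup generated by $\{(y,1) : y \in P_v \cap \mathbb{Z}^d\}$. -/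
/-! The generators of `S_P` not lying over the base facet can be pushed one step along `(v, 0)`
without leaving `S_P`. Hence if a sum of generators cannot be pushed, none of its summands can,
so all of them lie over `P_v`. -/

namespace AddSubmonoid

theorem mem_closure_of_add_notMem_closure {M : Type*} [AddCommMonoid M] {s t : Set M} {w : M}
    (hmove : ∀ g ∈ s, g ∉ t → g + w ∈ closure s) {b : M} (hb : b ∈ closure s)
    (hbw : b + w ∉ closure s) : b ∈ closure t := by
  induction hb using closure_induction with
  | mem g hg =>
    by_contra hgt
    exact hbw (hmove g hg fun h => hgt (subset_closure h))
  | zero => exact zero_mem _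
  | add x y hx hy ihx ihy =>
    refine add_mem (ihx fun hxw => hbw ?_) (ihy fun hyw => hbw ?_)
    · rw [add_right_comm]; exact add_mem hxw hy
    · rw [add_assoc]; exact add_mem hx hyw

end AddSubmonoid

theorem height_moves_into_base_facet_semigroup_general
    (d : ℕ) (P : Set (Fin d → ℝ))
    (v : Fin d → ℤ)
    (Pv : Set (Fin d → ℝ))
    (hcol : ∀ x : Fin d → ℤ, (fun i => (x i : ℝ)) ∈ P → (fun i => (x i : ℝ)) ∉ Pv →
      (fun i => ((x + v) i : ℝ)) ∈ P)
    (SP SPv : AddSubmonoid ((Fin d → ℤ) × ℤ))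
    (hSP : SP = AddSubmonoid.closure
      {p | ∃ x : Fin d → ℤ, (fun i => (x i : ℝ)) ∈ P ∧ p = (x, 1)})
    (hSPv : SPv = AddSubmonoid.closure
      {p | ∃ x : Fin d → ℤ, (fun i => (x i : ℝ)) ∈ Pv ∧ p = (x, 1)}) :
    ∀ a ∈ SP, ∀ m : ℕ,
      a + m • ((v, 0) : (Fin d → ℤ) × ℤ) ∈ SP →
      a + (m + 1) • ((v, 0) : (Fin d → ℤ) × ℤ) ∉ SP →
      a + m • ((v, 0) : (Fin d → ℤ) × ℤ) ∈ SPv := by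
  intro a _ m hm hnext
  subst hSP hSPv
  refine AddSubmonoid.mem_closure_of_add_notMem_closure ?_ hm (by rwa [add_assoc, ← succ_nsmul])
  rintro _ ⟨x, hxP, rfl⟩ hxPv
  have hx : (fun i => (x i : ℝ)) ∉ Pv := fun h => hxPv ⟨x, h, rfl⟩
  exact AddSubmonoid.subset_closure ⟨x + v, hcol x hxP hx, by simp⟩

/-- For a column structure `(P, v)` with base facet `P_v`, any element of `S_P` moved up to its
full height in direction `v` lands in the subsemigroup `S_{P_v}`. The polytope `P` is the convex
hull of a finite set of lattice points, the facet `P_v` is cut out by a supporting affine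
functional `φ`, and `S_P ⊂ ℤ^d × ℤ` is the monoid generated by `{(x,1) : x ∈ P ∩ ℤ^d}`. -/
theorem height_moves_into_base_facet_semigroup
    (d : ℕ) (V : Finset (Fin d → ℤ)) (P : Set (Fin d → ℝ))
    (hP : P = convexHull ℝ ((fun w : Fin d → ℤ => fun i => (w i : ℝ)) '' (V : Set (Fin d → ℤ))))
    (v : Fin d → ℤ) (hv : v ≠ 0)
    (φ : (Fin d → ℝ) →ᵃ[ℝ] ℝ) (hφ : ∀ p ∈ P, 0 ≤ φ p)
    (Pv : Set (Fin d → ℝ)) (hPv : Pv = {p ∈ P | φ p = 0}) (hPvne : Pv.Nonempty)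
    (hcol : ∀ x : Fin d → ℤ, (fun i => (x i : ℝ)) ∈ P → (fun i => (x i : ℝ)) ∉ Pv →
      (fun i => ((x + v) i : ℝ)) ∈ P)
    (SP SPv : AddSubmonoid ((Fin d → ℤ) × ℤ))
    (hSP : SP = AddSubmonoid.closure
      {p | ∃ x : Fin d → ℤ, (fun i => (x i : ℝ)) ∈ P ∧ p = (x, 1)})
    (hSPv : SPv = AddSubmonoid.closure
      {p | ∃ x : Fin d → ℤ, (fun i => (x i : ℝ)) ∈ Pv ∧ p = (x, 1)}) :
    ∀ a ∈ SP, ∀ m : ℕ,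
      a + m • ((v, 0) : (Fin d → ℤ) × ℤ) ∈ SP →
      a + (m + 1) • ((v, 0) : (Fin d → ℤ) × ℤ) ∉ SP →
      a + m • ((v, 0) : (Fin d → ℤ) × ℤ) ∈ SPv :=
  height_moves_into_base_facet_semigroup_general d P v Pv hcol SP SPv hSP hSPv
end

section
/- Let $k$ be a field and let $S$ be a free commutative monoid (e.g., the multiplicative monoid $(k[X_1,\dots,X_r]\setminus\{0\})/k^*$ of nonzero polynomials up to scalar, which is free on the irreducible polynomials). Suppose elements $\phi_x \in S$ indexed by the lattice points $x$ of $c\Delta_n$ satisfy $\phi_x + \phi_y = \phi_{x'} + \phi_{y'}$ (written additively) whenever $x + y = x' + y'$ for lattice points $x, y, x', y' \in c\Delta_n$. Then there exist elements $\psi, \eta_0, \dots, \eta_n \in S$ such that $\phi_x = \psi + a_0\eta_0 + a_1\eta_1 + \cdots + a_n\eta_n$ for every lattice point $x$ of $c\Delta_n$ with barycentric coordinates $(a_0, \dots, a_n)$. -/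
/-!
The relations make `φ` affine with integral slopes. Put `v = c eₖ` and `uᵢ = v - eₖ + eᵢ`;
since `a + v = (a - eᵢ + eₖ) + uᵢ`, moving one unit of `a` from coordinate `i` to `k` changes
`φ a` by `φ uᵢ - φ v`, and walking from `v` to `a` gives the subtraction-free identity
`φ a + c • φ v = φ v + ∑ aᵢ • φ uᵢ`. Coordinatewise, with `μ = minⱼ φ uⱼ`, this reads
`φ a = ψ + ∑ aᵢ • (φ uᵢ - μ)` for `ψ = φ v + c • (μ - φ v)`, and `ψ` is the minimum of `φ` over
the vertices, hence nonnegative.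
-/

open Finset

lemma Pi.single_one_le_of_ne_zero {ι : Type*} [DecidableEq ι] {a : ι → ℕ} {j : ι} (h : a j ≠ 0) :
    Pi.single j 1 ≤ a := by
  intro t
  rcases eq_or_ne t j with rfl | htj <;> simp [*, Nat.one_le_iff_ne_zero]

abbrev SimplexPoint (c n : ℕ) := {a : Fin (n + 1) → ℕ // ∑ i, a i = c}

namespace SimplexPoint

variable {c n : ℕ}

def vertex (c : ℕ) (k : Fin (n + 1)) : SimplexPoint c n := ⟨Pi.single k c, by simp⟩

lemma sum_vertex_smul {M : Type*} [AddCommMonoid M] (k : Fin (n + 1)) (g : Fin (n + 1) → M) :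
    ∑ i, (vertex c k).1 i • g i = c • g k := by
  simp [vertex, Pi.single_apply]

lemma eq_vertex_of_apply_eq {a : SimplexPoint c n} {k : Fin (n + 1)} (h : a.1 k = c) :
    a = vertex c k := by
  have hrest : ∑ i ∈ univ.erase k, a.1 i = 0 := by
    have := add_sum_erase univ a.1 (mem_univ k)
    rw [a.2, h] at this
    omega
  ext i
  rcases eq_or_ne i k with rfl | hik
  · simp [vertex, h]
  · simpa [vertex, hik] using sum_eq_zero_iff.1 hrest i (mem_erase.2 ⟨hik, mem_univ i⟩)

lemma exists_ne_apply_ne_zero {a : SimplexPoint c n} {k : Fin (n + 1)} (h : a.1 k ≠ c) :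
    ∃ i ≠ k, a.1 i ≠ 0 := by
  by_contra! hzero
  exact h ((sum_eq_single k (fun i _ hik => hzero i hik) (by simp)).symm.trans a.2)

def transfer (a : SimplexPoint c n) (i j : Fin (n + 1)) (h : a.1 j ≠ 0) : SimplexPoint c n :=
  ⟨a.1 - Pi.single j 1 + Pi.single i 1, by
    have hsum := congrArg (fun x : Fin (n + 1) → ℕ => ∑ t, x t)
      (tsub_add_cancel_of_le (Pi.single_one_le_of_ne_zero h))
    simp only [Pi.add_apply, sum_add_distrib, sum_pi_single', mem_univ, if_true] at hsum ⊢
    rw [hsum, a.2]⟩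

lemma transfer_add_single (a : SimplexPoint c n) (i j : Fin (n + 1)) (h : a.1 j ≠ 0) :
    (a.transfer i j h).1 + Pi.single j 1 = a.1 + Pi.single i 1 := by
  simp only [transfer, add_right_comm _ (Pi.single i 1),
    tsub_add_cancel_of_le (Pi.single_one_le_of_ne_zero h)]

lemma transfer_self (a : SimplexPoint c n) (i : Fin (n + 1)) (h : a.1 i ≠ 0) :
    a.transfer i i h = a :=
  Subtype.ext (add_right_cancel (transfer_add_single a i i h))

lemma transfer_add_transfer (a b : SimplexPoint c n) (i j : Fin (n + 1)) (ha : a.1 j ≠ 0)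
    (hb : b.1 i ≠ 0) : (a.transfer i j ha).1 + (b.transfer j i hb).1 = a.1 + b.1 := by
  apply add_right_cancel (b := Pi.single j 1 + Pi.single i 1)
  rw [add_add_add_comm, transfer_add_single, transfer_add_single, add_add_add_comm,
    add_comm (Pi.single i 1)]

lemma sum_transfer_smul_add {M : Type*} [AddCommMonoid M] (a : SimplexPoint c n)
    (i j : Fin (n + 1)) (h : a.1 j ≠ 0) (g : Fin (n + 1) → M) :
    ∑ t, (a.transfer i j h).1 t • g t + g j = ∑ t, a.1 t • g t + g i := by
  have := congrArg (fun x : Fin (n + 1) → ℕ => ∑ t, x t • g t) (transfer_add_single a i j h)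
  simpa [add_smul, sum_add_distrib, Pi.single_apply] using this

lemma vertex_apply_self_ne_zero (hc : c ≠ 0) (k : Fin (n + 1)) : (vertex c k).1 k ≠ 0 := by
  simpa [vertex] using hc

def nearVertex (hc : c ≠ 0) (k i : Fin (n + 1)) : SimplexPoint c n :=
  (vertex c k).transfer i k (vertex_apply_self_ne_zero hc k)

theorem apply_add_smul_vertex_eq {M : Type*} [AddCommMonoid M] [IsRightCancelAdd M] (hc : c ≠ 0)
    {f : SimplexPoint c n → M}
    (hf : ∀ a b a' b' : SimplexPoint c n, a.1 + b.1 = a'.1 + b'.1 → f a + f b = f a' + f b')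
    (k : Fin (n + 1)) (a : SimplexPoint c n) :
    f a + c • f (vertex c k) = f (vertex c k) + ∑ i, a.1 i • f (nearVertex hc k i) := by
  have hnear : nearVertex hc k k = vertex c k := transfer_self _ _ _
  induction hd : c - a.1 k generalizing a with
  | zero =>
    have hak : a.1 k ≤ c := (single_le_sum (fun _ _ => Nat.zero_le _) (mem_univ k)).trans_eq a.2
    obtain rfl := eq_vertex_of_apply_eq (show a.1 k = c by omega)
    simp [sum_vertex_smul, hnear]
  | succ d ih =>
    obtain ⟨i, hik, hi⟩ := exists_ne_apply_ne_zero (show a.1 k ≠ c by omega)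
    set a' := a.transfer k i hi
    have hswap : f a + f (vertex c k) = f a' + f (nearVertex hc k i) :=
      hf _ _ _ _ (transfer_add_transfer _ _ _ _ _ _).symm
    have ha' : c - a'.1 k = d := by
      have : a'.1 k = a.1 k + 1 := by
        simpa [hik.symm] using congrFun (transfer_add_single a k i hi) k
      omega
    have hsum := sum_transfer_smul_add a k i hi (fun t => f (nearVertex hc k t))
    apply add_right_cancel (b := f (vertex c k))
    calc f a + c • f (vertex c k) + f (vertex c k)
        = f a' + c • f (vertex c k) + f (nearVertex hc k i) := by
          rw [add_right_comm, hswap, add_right_comm]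
      _ = f (vertex c k) + ∑ t, a.1 t • f (nearVertex hc k t) + f (vertex c k) := by
          rw [ih a' ha', add_assoc, hsum, hnear, add_assoc]

theorem exists_eq_add_sum_smul_of_add_smul_eq {σ : Type*} {F : SimplexPoint c n → σ →₀ ℕ}
    {P : σ →₀ ℕ} {U : Fin (n + 1) → σ →₀ ℕ} (hF : ∀ a, F a + c • P = P + ∑ i, a.1 i • U i) :
    ∃ (ψ : σ →₀ ℕ) (η : Fin (n + 1) → σ →₀ ℕ), ∀ a, F a = ψ + ∑ i, a.1 i • η i := by
  set μ := univ.inf' univ_nonempty U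
  have hvertex (k : Fin (n + 1)) : c • P ≤ P + c • U k := by
    rw [← sum_vertex_smul k U, ← hF]
    exact le_add_self
  have hμ : c • P ≤ P + c • μ := by
    rw [apply_inf'_eq_inf'_comp _ (P + c • ·) fun x y => by
      ext s
      simp only [Finsupp.add_apply, Finsupp.smul_apply, Finsupp.inf_apply, smul_eq_mul]
      rw [← Nat.mul_min_mul_left, Nat.add_min_add_left]]
    exact le_inf' _ _ fun k _ => hvertex k
  -- pointwise, `P + c • μ - c • P` is the minimum of `F` over the vertices
  refine ⟨P + c • μ - c • P, fun i => U i - μ, fun a => add_right_cancel (b := c • P) ?_⟩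
  calc F a + c • P = P + ∑ i, a.1 i • (U i - μ + μ) := by
        have hU (i) : U i - μ + μ = U i := tsub_add_cancel_of_le (inf'_le U (mem_univ i))
        simp only [hU, hF]
    _ = P + c • μ - c • P + ∑ i, a.1 i • (U i - μ) + c • P := by
        rw [add_right_comm, tsub_add_cancel_of_le hμ]
        simp_rw [smul_add, sum_add_distrib, ← sum_smul, a.2]
        abel

end SimplexPoint

open Finset in
/-- Factorization in a free commutative monoid: a family `φ` indexed by the lattice points of
`cΔₙ` (given by their barycentric coordinates `a` with `∑ a = c`) compatible with the binomial
relations of `cΔₙ` decomposes as `φₐ = ψ + ∑ aᵢ • ηᵢ`. Here the free commutative monoid is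
`σ →₀ ℕ` (written additively). -/
theorem free_comm_monoid_simplex_factorization
    (σ : Type*) (c n : ℕ) (hc : 1 ≤ c)
    (φ : {a : Fin (n + 1) → ℕ // (∑ i, a i) = c} → (σ →₀ ℕ))
    (hrel : ∀ a b a' b' : {a : Fin (n + 1) → ℕ // (∑ i, a i) = c},
      (∀ j : Fin n, a.1 j.succ + b.1 j.succ = a'.1 j.succ + b'.1 j.succ) →
      φ a + φ b = φ a' + φ b') :
    ∃ (ψ : σ →₀ ℕ) (η : Fin (n + 1) → (σ →₀ ℕ)),
      ∀ a : {a : Fin (n + 1) → ℕ // (∑ i, a i) = c},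
        φ a = ψ + ∑ i, a.1 i • η i :=
  SimplexPoint.exists_eq_add_sum_smul_of_add_smul_eq <|
    SimplexPoint.apply_add_smul_vertex_eq (Nat.one_le_iff_ne_zero.1 hc)
      (fun a b a' b' h => hrel a b a' b' fun j => congrFun h j.succ) 0
end
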